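/- arXiv:2504.11429 — 3 statements merged into one kernel-verified Lean document; each statement's English description precedes it below -/
import Mathlib

section
/- Let A be a measurable space, ε ≥ 0, C and C' countable sets, (P_τ)_{τ∈C} and (Q_{τ'})_{τ'∈C'} families of probability measures on A, 𝒯 and 𝒯' probability distributions on C and C' respectively, and ν a coupling of 𝒯 and 𝒯' (a probability distribution on C × C' whose marginals are 𝒯 and 𝒯'). Then Δ_ε( Σ_{τ} 𝒯(τ)·P_τ , Σ_{τ'} 𝒯'(τ')·Q_{τ'} ) ≤ Σ_{(τ,τ')} ν(τ,τ')·Δ_ε(P_τ, Q_{τ'}). -/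
open MeasureTheory Real
open scoped ENNReal

noncomputable section

/-- Hockey-stick divergence / privacy curve `Δ_ε(μ,ν)`. -/
def hsDiv {A : Type*} [MeasurableSpace A] (ε : ℝ) (μ ν : Measure A) : ℝ :=
  ⨆ S : {S : Set A // MeasurableSet S}, ((μ S.1).toReal - Real.exp ε * (ν S.1).toReal)

/-- Subsampling map induced by a template. -/
def SAMP {W : Type*} {n m : ℕ} (τ : Fin m → Fin n) (x : Fin n → W) : Fin m → W :=
  fun i => x (τ i)

/-- Product measure with `j`-th factor replaced by the Dirac measure at `v`. -/
def fixEntry {W : Type*} [MeasurableSpace W] {n : ℕ} (μbar : Fin n → Measure W)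
    (j : Fin n) (v : W) : Measure (Fin n → W) :=
  Measure.pi (Function.update μbar j (Measure.dirac v))

open Classical in
/-- Sampling privacy curve `SPC^j` : conditional expectation over templates containing `j`. -/
def SPCj {W A : Type*} [MeasurableSpace W] [MeasurableSpace A] {n m : ℕ}
    (F : (Fin m → W) → A) (μbar : Fin n → Measure W)
    (𝒯 : (Fin m → Fin n) → ℝ≥0∞) (j : Fin n) (ε : ℝ) : ℝ :=
  (∑ τ : Fin m → Fin n, if j ∈ Set.range τ then (𝒯 τ).toReal *
      (⨆ v : W, ⨆ w : W, hsDiv ε (Measure.map (fun x => F (SAMP τ x)) (fixEntry μbar j v))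
        (Measure.map (fun x => F (SAMP τ x)) (fixEntry μbar j w))) else 0) /
  (∑ τ : Fin m → Fin n, if j ∈ Set.range τ then (𝒯 τ).toReal else 0)

open Classical in
/-- Uniform distribution on injective templates (sampling without replacement). -/
def uniformInj (n m : ℕ) : (Fin m → Fin n) → ℝ≥0∞ :=
  fun τ => if Function.Injective τ then
    ((Finset.univ.filter (fun σ : Fin m → Fin n => Function.Injective σ)).card : ℝ≥0∞)⁻¹ else 0

open Classical in
/-- Conditioning of a distribution on templates to an event. -/
def condDist {n m : ℕ} (𝒯 : (Fin m → Fin n) → ℝ≥0∞) (E : Set (Fin m → Fin n)) :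
    (Fin m → Fin n) → ℝ≥0∞ :=
  fun τ => if τ ∈ E then 𝒯 τ / (∑ σ : Fin m → Fin n, if σ ∈ E then 𝒯 σ else 0) else 0

/-- The increasing enumeration of a finite set of indices, as a sampling template. -/
def poissonTemplate {n : ℕ} (s : Finset (Fin n)) : Fin s.card → Fin n :=
  fun i => (s.orderIsoOfFin rfl i : Fin n)

/-- Statistical privacy curve of a query. -/
def Phi {W A : Type*} [MeasurableSpace W] [MeasurableSpace A] {k : ℕ}
    (μbar : Fin k → Measure W) (F : (Fin k → W) → A) (ε : ℝ) : ℝ :=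
  ⨆ j : Fin k, ⨆ v : W, ⨆ w : W,
    hsDiv ε (Measure.map F (fixEntry μbar j v)) (Measure.map F (fixEntry μbar j w))

/-- trade-off function -/
def tradeOff {A : Type*} [MeasurableSpace A] (P Q : Measure A) (α : ℝ) : ℝ :=
  sInf { y | ∃ S : Set A, MeasurableSet S ∧ (P Sᶜ).toReal ≤ α ∧ y = (Q S).toReal }

/-- total variation distance -/
def tvDist {A : Type*} [MeasurableSpace A] (μ ν : Measure A) : ℝ :=
  ⨆ S : {S : Set A // MeasurableSet S}, |(μ S.1).toReal - (ν S.1).toReal|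

/-- support of a measure -/
def msupport {X : Type*} [TopologicalSpace X] [MeasurableSpace X] (μ : Measure X) : Set X :=
  {x | ∀ U : Set X, IsOpen U → x ∈ U → 0 < μ U}

/-- τ ≈_j σ -/
def ApproxAt {n m : ℕ} (j : Fin n) (τ σ : Fin m → Fin n) : Prop :=
  ∀ i, (τ i ≠ j → σ i = τ i) ∧ (τ i = j → σ i ≠ j)

/-- F-samplable -/
def FSamplable {W : Type*} [MeasurableSpace W] {n m : ℕ}
    (μbar : Fin n → Measure W) (F : (Fin m → W) → ℝ) : Prop :=
  ∀ (τ σ : Fin m → Fin n) (j : Fin n) (v w : W) (ε : ℝ), 0 ≤ ε →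
    ∃ S : Set ℝ, ((∃ a, S = Set.Iic a) ∨ (∃ a, S = Set.Ici a) ∨ S = ∅) ∧
      ((Measure.map (fun x => F (SAMP τ x)) (fixEntry μbar j v)) S).toReal -
        Real.exp ε * ((Measure.map (fun x => F (SAMP σ x)) (fixEntry μbar j w)) S).toReal =
      hsDiv ε (Measure.map (fun x => F (SAMP τ x)) (fixEntry μbar j v))
        (Measure.map (fun x => F (SAMP σ x)) (fixEntry μbar j w))

/-! Both mixtures are also mixtures over `C × C'` with the common weights `ν`, by the marginal
conditions. This reduces the claim to joint convexity of `Δ_ε`, which holds set by set because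
`μ S - e^ε ν S` is linear in the pair `(μ, ν)`. -/

section HockeyStick

variable {A : Type*} [MeasurableSpace A] (ε : ℝ)

lemma sub_le_hsDiv (μ ν : Measure A) [IsFiniteMeasure μ] {S : Set A} (hS : MeasurableSet S) :
    (μ S).toReal - Real.exp ε * (ν S).toReal ≤ hsDiv ε μ ν := by
  refine le_ciSup (f := fun S : {S : Set A // MeasurableSet S} =>
    (μ S.1).toReal - Real.exp ε * (ν S.1).toReal) ⟨(μ Set.univ).toReal, ?_⟩ ⟨S, hS⟩
  rintro _ ⟨S, rfl⟩
  have hμ : (μ S.1).toReal ≤ (μ Set.univ).toReal :=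
    ENNReal.toReal_mono (measure_ne_top μ _) (measure_mono (Set.subset_univ _))
  have hν : 0 ≤ Real.exp ε * (ν S.1).toReal := by positivity
  linarith

lemma hsDiv_nonneg (μ ν : Measure A) [IsFiniteMeasure μ] : 0 ≤ hsDiv ε μ ν := by
  simpa using sub_le_hsDiv ε μ ν MeasurableSet.empty

lemma hsDiv_le_one (μ ν : Measure A) [IsProbabilityMeasure μ] : hsDiv ε μ ν ≤ 1 := by
  refine ciSup_le fun S => ?_
  have hμ : (μ S.1).toReal ≤ 1 := measureReal_le_one
  have hν : 0 ≤ Real.exp ε * (ν S.1).toReal := by positivity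
  linarith

lemma toReal_sum_smul_apply {ι : Type*} {w : ι → ℝ≥0∞} (hw : ∀ i, w i ≠ ∞)
    (ρ : ι → Measure A) [∀ i, IsFiniteMeasure (ρ i)] {S : Set A} (hS : MeasurableSet S) :
    ((Measure.sum fun i => w i • ρ i) S).toReal = ∑' i, (w i).toReal * (ρ i S).toReal := by
  simp only [Measure.sum_apply _ hS, Measure.smul_apply, smul_eq_mul]
  rw [ENNReal.tsum_toReal_eq fun i => ENNReal.mul_ne_top (hw i) (measure_ne_top _ _)]
  simp only [ENNReal.toReal_mul]

theorem hsDiv_sum_smul_le {ι : Type*} {w : ι → ℝ≥0∞} (hw : ∑' i, w i ≠ ∞)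
    (μ ν : ι → Measure A) [∀ i, IsProbabilityMeasure (μ i)]
    [∀ i, IsProbabilityMeasure (ν i)] :
    hsDiv ε (Measure.sum fun i => w i • μ i) (Measure.sum fun i => w i • ν i)
      ≤ ∑' i, (w i).toReal * hsDiv ε (μ i) (ν i) := by
  have hw_ne_top : ∀ i, w i ≠ ∞ := fun i => ENNReal.ne_top_of_tsum_ne_top hw i
  have summable_of_mem_Icc : ∀ x : ι → ℝ, (∀ i, 0 ≤ x i) → (∀ i, x i ≤ 1) →
      Summable fun i => (w i).toReal * x i := fun x hx0 hx1 =>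
    (ENNReal.summable_toReal hw).of_nonneg_of_le (fun i => by have := hx0 i; positivity)
      fun i => mul_le_of_le_one_right ENNReal.toReal_nonneg (hx1 i)
  refine ciSup_le fun ⟨S, hS⟩ => ?_
  have hμ := summable_of_mem_Icc (fun i => (μ i S).toReal) (fun _ => ENNReal.toReal_nonneg)
    fun _ => measureReal_le_one
  have hν := summable_of_mem_Icc (fun i => (ν i S).toReal) (fun _ => ENNReal.toReal_nonneg)
    fun _ => measureReal_le_one
  have hdiv := summable_of_mem_Icc (fun i => hsDiv ε (μ i) (ν i)) (fun _ => hsDiv_nonneg ε _ _)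
    fun _ => hsDiv_le_one ε _ _
  have hsub := hμ.sub (hν.mul_left (Real.exp ε))
  calc _ = ∑' i, ((w i).toReal * (μ i S).toReal -
          Real.exp ε * ((w i).toReal * (ν i S).toReal)) := by
        rw [toReal_sum_smul_apply hw_ne_top μ hS, toReal_sum_smul_apply hw_ne_top ν hS,
          hμ.tsum_sub (hν.mul_left _), tsum_mul_left]
    _ ≤ ∑' i, (w i).toReal * hsDiv ε (μ i) (ν i) := by
        refine hsub.tsum_le_tsum (fun i => ?_) hdiv
        rw [← mul_left_comm, ← mul_sub]
        exact mul_le_mul_of_nonneg_left (sub_le_hsDiv ε _ _ hS) ENNReal.toReal_nonneg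

end HockeyStick

namespace MeasureTheory.Measure

variable {A C C' : Type*} [MeasurableSpace A] {ν : C × C' → ℝ≥0∞}

lemma sum_smul_eq_sum_coupling_fst (P : C → Measure A) {T : C → ℝ≥0∞}
    (hν : ∀ τ, ∑' τ', ν (τ, τ') = T τ) :
    sum (fun τ => T τ • P τ) = sum fun q : C × C' => ν q • P q.1 := by
  ext S hS
  simp only [sum_apply _ hS, smul_apply, smul_eq_mul, ENNReal.tsum_prod', ← hν,
    ENNReal.tsum_mul_right]

lemma sum_smul_eq_sum_coupling_snd (Q : C' → Measure A) {T' : C' → ℝ≥0∞}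
    (hν : ∀ τ', ∑' τ, ν (τ, τ') = T' τ') :
    sum (fun τ' => T' τ' • Q τ') = sum fun q : C × C' => ν q • Q q.2 := by
  ext S hS
  simp only [sum_apply _ hS, smul_apply, smul_eq_mul, ENNReal.tsum_prod',
    ENNReal.tsum_comm (α := C), ← hν, ENNReal.tsum_mul_right]

end MeasureTheory.Measure

theorem hsDiv_mixture_le_coupling_general
    {A C C' : Type*} [MeasurableSpace A]
    (ε : ℝ)
    (P : C → Measure A) (hP : ∀ τ, IsProbabilityMeasure (P τ))
    (Q : C' → Measure A) (hQ : ∀ τ', IsProbabilityMeasure (Q τ'))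
    (T : C → ℝ≥0∞) (hT : ∑' τ, T τ = 1)
    (T' : C' → ℝ≥0∞)
    (ν : C × C' → ℝ≥0∞)
    (hνfst : ∀ τ, ∑' τ' : C', ν (τ, τ') = T τ)
    (hνsnd : ∀ τ', ∑' τ : C, ν (τ, τ') = T' τ') :
    hsDiv ε (Measure.sum fun τ => T τ • P τ) (Measure.sum fun τ' => T' τ' • Q τ')
      ≤ ∑' q : C × C', (ν q).toReal * hsDiv ε (P q.1) (Q q.2) := by
  have hν : ∑' q, ν q = 1 := by rw [ENNReal.tsum_prod', ← hT]; simp only [hνfst]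
  rw [Measure.sum_smul_eq_sum_coupling_fst P hνfst, Measure.sum_smul_eq_sum_coupling_snd Q hνsnd]
  have := hP; have := hQ
  exact hsDiv_sum_smul_le ε (hν.trans_ne ENNReal.one_ne_top) (fun q => P q.1) (fun q => Q q.2)

/-- the hockey-stick divergence of two mixtures is bounded by the
coupling-weighted average of the pairwise divergences. -/
theorem hsDiv_mixture_le_coupling
    {A C C' : Type*} [MeasurableSpace A] [Countable C] [Countable C']
    (ε : ℝ) (hε : 0 ≤ ε)
    (P : C → Measure A) (hP : ∀ τ, IsProbabilityMeasure (P τ))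
    (Q : C' → Measure A) (hQ : ∀ τ', IsProbabilityMeasure (Q τ'))
    (T : C → ℝ≥0∞) (hT : ∑' τ, T τ = 1)
    (T' : C' → ℝ≥0∞) (hT' : ∑' τ', T' τ' = 1)
    (ν : C × C' → ℝ≥0∞)
    (hνfst : ∀ τ, ∑' τ' : C', ν (τ, τ') = T τ)
    (hνsnd : ∀ τ', ∑' τ : C, ν (τ, τ') = T' τ') :
    hsDiv ε (Measure.sum fun τ => T τ • P τ) (Measure.sum fun τ' => T' τ' • Q τ')
      ≤ ∑' q : C × C', (ν q).toReal * hsDiv ε (P q.1) (Q q.2) :=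
  hsDiv_mixture_le_coupling_general ε P hP Q hQ T hT T' ν hνfst hνsnd

end
end

section
/- Let P and Q be probability measures on a measurable space A and let δ : [0,∞) → [0,1] be a function such that for all ε ≥ 0 both Δ_ε(P, Q) ≤ δ(ε) and Δ_ε(Q, P) ≤ δ(ε). Then for every α ∈ [0,1]: T_{P,Q}(α) ≥ sup_{ε ≥ 0} max{ 0, 1 − δ(ε) − e^ε·α, e^{−ε}·(1 − δ(ε) − α) }. -/
open MeasureTheory Real
open scoped ENNReal

noncomputable section

lemma le_hsDiv' {A : Type*} [MeasurableSpace A] (ε : ℝ) (μ ν : Measure A)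
    [IsProbabilityMeasure μ] {S : Set A} (hS : MeasurableSet S) :
    (μ S).toReal - Real.exp ε * (ν S).toReal ≤ hsDiv ε μ ν := by
  have hb : BddAbove (Set.range fun T : {S : Set A // MeasurableSet S} =>
      ((μ T.1).toReal - Real.exp ε * (ν T.1).toReal)) := by
    refine ⟨1, ?_⟩
    rintro _ ⟨⟨T, hT⟩, rfl⟩
    have h1 : (μ T).toReal ≤ 1 := by
      have := ENNReal.toReal_mono (by simp) (prob_le_one (μ := μ) (s := T))
      simpa using this
    have h2 : 0 ≤ Real.exp ε * (ν T).toReal :=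
      mul_nonneg (Real.exp_pos ε).le ENNReal.toReal_nonneg
    simp only []
    linarith
  exact le_ciSup hb ⟨S, hS⟩

/-- a two-sided `(ε, δ(ε))` privacy-curve bound yields a lower bound on
the trade-off function. -/
theorem tradeOff_ge_of_privacy_curve
    {A : Type*} [MeasurableSpace A]
    (P Q : Measure A) [IsProbabilityMeasure P] [IsProbabilityMeasure Q]
    (δ : ℝ → ℝ) (hδrange : ∀ ε : ℝ, 0 ≤ ε → δ ε ∈ Set.Icc (0 : ℝ) 1)
    (hPQ : ∀ ε : ℝ, 0 ≤ ε → hsDiv ε P Q ≤ δ ε)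
    (hQP : ∀ ε : ℝ, 0 ≤ ε → hsDiv ε Q P ≤ δ ε)
    (α : ℝ) (hα : α ∈ Set.Icc (0 : ℝ) 1) :
    tradeOff P Q α ≥
      ⨆ ε : {ε : ℝ // 0 ≤ ε},
        max 0 (max (1 - δ ε - Real.exp ε * α)
          (Real.exp (-(ε : ℝ)) * (1 - δ ε - α))) := by
  have hne : { y | ∃ S : Set A, MeasurableSet S ∧ (P Sᶜ).toReal ≤ α ∧ y = (Q S).toReal }.Nonempty := by
    refine ⟨(Q Set.univ).toReal, Set.univ, MeasurableSet.univ, ?_, rfl⟩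
    simpa using hα.1
  rw [ge_iff_le, tradeOff]
  refine le_csInf hne ?_
  rintro y ⟨S, hS, hPSc, rfl⟩
  refine ciSup_le ?_
  rintro ⟨ε, hε⟩
  have hsum : ∀ (μ : Measure A) [IsProbabilityMeasure μ],
      (μ S).toReal + (μ Sᶜ).toReal = 1 := by
    intro μ _
    have h := prob_add_prob_compl (μ := μ) hS
    have := congrArg ENNReal.toReal h
    rwa [ENNReal.toReal_add (measure_ne_top μ S) (measure_ne_top μ Sᶜ)] at this
  have hP := hsum P
  have hQ := hsum Q
  have h1 : (Q Sᶜ).toReal - Real.exp ε * (P Sᶜ).toReal ≤ δ ε :=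
    (le_hsDiv' ε Q P hS.compl).trans (hQP ε hε)
  have h2 : (P S).toReal - Real.exp ε * (Q S).toReal ≤ δ ε :=
    (le_hsDiv' ε P Q hS).trans (hPQ ε hε)
  have hexp : 0 < Real.exp ε := Real.exp_pos ε
  have hq0 : 0 ≤ (Q S).toReal := ENNReal.toReal_nonneg
  refine max_le hq0 (max_le ?_ ?_)
  · -- 1 - δ - e^ε α ≤ Q S
    have : Real.exp ε * (P Sᶜ).toReal ≤ Real.exp ε * α :=
      mul_le_mul_of_nonneg_left hPSc hexp.le
    linarith
  · -- e^{-ε}(1 - δ - α) ≤ Q S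
    rw [Real.exp_neg]
    rw [inv_mul_le_iff₀ hexp, mul_comm]
    linarith

end
end

section
/- Let μ₀, μ₁, ν₁ be probability measures on a measurable space A, λ ∈ [0,1], and define μ := (1−λ)·μ₀ + λ·μ₁ and ν := (1−λ)·μ₀ + λ·ν₁. Fix ε ≥ 0 and let ε' := log(1 + λ·(e^ε − 1)). Then Δ_{ε'}(μ, ν) ≤ λ·( (1 − e^{ε'−ε})·Δ_ε(μ₁, μ₀) + e^{ε'−ε}·Δ_ε(μ₁, ν₁) ). -/
open MeasureTheory Real
open scoped ENNReal

noncomputable section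

lemma le_hsDiv_aux {A : Type*} [MeasurableSpace A] (ε : ℝ) (P Q : Measure A)
    [IsProbabilityMeasure P] (S : Set A) (hS : MeasurableSet S) :
    (P S).toReal - Real.exp ε * (Q S).toReal ≤ hsDiv ε P Q := by
  have hbdd : BddAbove (Set.range fun T : {T : Set A // MeasurableSet T} =>
      (P T.1).toReal - Real.exp ε * (Q T.1).toReal) := by
    refine ⟨1, ?_⟩
    rintro x ⟨T, rfl⟩
    have h1 : (P T.1).toReal ≤ 1 := by
      have := prob_le_one (μ := P) (s := T.1)
      simpa using ENNReal.toReal_le_of_le_ofReal zero_le_one (by simpa using this)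
    have h2 : 0 ≤ Real.exp ε * (Q T.1).toReal := by positivity
    dsimp only
    linarith
  exact le_ciSup hbdd ⟨S, hS⟩

/-- advanced joint convexity of the hockey-stick divergence. -/
theorem advanced_joint_convexity
    {A : Type*} [MeasurableSpace A]
    (μ₀ μ₁ ν₁ : Measure A) [IsProbabilityMeasure μ₀] [IsProbabilityMeasure μ₁]
    [IsProbabilityMeasure ν₁]
    (l : ℝ) (hl : l ∈ Set.Icc (0 : ℝ) 1)
    (ε : ℝ) (hε : 0 ≤ ε) :
    hsDiv (Real.log (1 + l * (Real.exp ε - 1)))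
      (ENNReal.ofReal (1 - l) • μ₀ + ENNReal.ofReal l • μ₁)
      (ENNReal.ofReal (1 - l) • μ₀ + ENNReal.ofReal l • ν₁)
      ≤ l * ((1 - Real.exp (Real.log (1 + l * (Real.exp ε - 1)) - ε)) * hsDiv ε μ₁ μ₀
          + Real.exp (Real.log (1 + l * (Real.exp ε - 1)) - ε) * hsDiv ε μ₁ ν₁) := by
  obtain ⟨hl0, hl1⟩ := hl
  have hE1 : 1 ≤ Real.exp ε := Real.one_le_exp hε
  set ε' := Real.log (1 + l * (Real.exp ε - 1)) with hε'def
  set β := Real.exp (ε' - ε) with hβdef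
  have hXpos : 0 < 1 + l * (Real.exp ε - 1) := by nlinarith
  have hexpε' : Real.exp ε' = 1 + l * (Real.exp ε - 1) := Real.exp_log hXpos
  have hEβ : Real.exp ε * β = 1 + l * (Real.exp ε - 1) := by
    rw [hβdef, ← Real.exp_add]
    rw [show ε + (ε' - ε) = ε' by ring, hexpε']
  have hβ0 : 0 < β := Real.exp_pos _
  have hβ1 : β ≤ 1 := by
    rw [hβdef, Real.exp_le_one_iff, sub_nonpos, ← Real.exp_le_exp, hexpε']
    nlinarith
  set D₁ := hsDiv ε μ₁ μ₀ with hD₁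
  set D₂ := hsDiv ε μ₁ ν₁ with hD₂
  refine ciSup_le fun S => ?_
  have h1 : (μ₁ S.1).toReal - Real.exp ε * (μ₀ S.1).toReal ≤ D₁ :=
    le_hsDiv_aux ε μ₁ μ₀ S.1 S.2
  have h2 : (μ₁ S.1).toReal - Real.exp ε * (ν₁ S.1).toReal ≤ D₂ :=
    le_hsDiv_aux ε μ₁ ν₁ S.1 S.2
  have hfin : ∀ (P : Measure A) [IsProbabilityMeasure P] (r : ℝ),
      ENNReal.ofReal r * P S.1 ≠ ⊤ := by
    intro P _ r
    exact ENNReal.mul_ne_top ENNReal.ofReal_ne_top (measure_ne_top P S.1)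
  have hcomp : ∀ (P Q : Measure A) [IsProbabilityMeasure P] [IsProbabilityMeasure Q],
      ((ENNReal.ofReal (1 - l) • P + ENNReal.ofReal l • Q) S.1).toReal
        = (1 - l) * (P S.1).toReal + l * (Q S.1).toReal := by
    intro P Q _ _
    rw [Measure.add_apply, Measure.smul_apply, Measure.smul_apply, smul_eq_mul,
      smul_eq_mul, ENNReal.toReal_add (hfin P _) (hfin Q _), ENNReal.toReal_mul,
      ENNReal.toReal_mul, ENNReal.toReal_ofReal (by linarith),
      ENNReal.toReal_ofReal hl0]
  rw [hcomp μ₀ μ₁, hcomp μ₀ ν₁]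
  set a := (μ₀ S.1).toReal
  set b := (μ₁ S.1).toReal
  set c := (ν₁ S.1).toReal
  have key : (1 - l) * a + l * b - Real.exp ε' * ((1 - l) * a + l * c)
      = l * ((1 - β) * (b - Real.exp ε * a) + β * (b - Real.exp ε * c)) := by
    rw [hexpε']
    linear_combination (l * c - l * a) * hEβ
  rw [key]
  have hc1 : 0 ≤ l * (1 - β) := by nlinarith
  have hc2 : 0 ≤ l * β := by nlinarith
  nlinarith [mul_le_mul_of_nonneg_left h1 hc1, mul_le_mul_of_nonneg_left h2 hc2]

end
end
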